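/- Let ξ ≥ 0, C > 0, δ > 0, and let c : ℤ → ℂ satisfy c_{−k} = conj(c_k) and |c_k| ≤ C·e^{−δ·|k|} for all k ∈ ℤ. For x ≥ 0 set ρ̃(x) = Σ_{k∈ℤ} c_k·ρ_{ξ,k}(x). Suppose ρ̃(x) is a positive real number for every x ≥ 0. Then for every x ∈ ℝ the sum Σ_{k∈ℤ} √(ξ+ik)·c_k·e^{ikx} (principal branch of the complex square root) is a nonnegative real number. Moreover, if ξ = 0, then c_k = 0 for every k ≠ 0. -/

import Mathlib

/-!
Write `w_k = ξ + ik`. On `Re w ≥ 0`, `∫₀^T e^{-wu²} du = √π/(2√w) + O(1/(|w|T))` (integration by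
parts for the tail; for `Re w = 0` by continuity in `w` from `Re w > 0`). Hence
`ρ_{ξ,k}(x) = (2/√π) e^{ξx} √x (√w_k e^{ikx} + O(x^{-1/2}))` uniformly in `k`, and dividing
`ρ̃(x) > 0` by `(2/√π) e^{ξx} √x` shows that the `2π`-periodic function
`S(x) = Σ √w_k c_k e^{ikx}` lies within `O(x^{-1/2})` of `[0, ∞)`; by periodicity `S ≥ 0`.
If `ξ = 0` the zeroth coefficient of `S` is `√0 · c₀ = 0`, so `∫₀^{2π} |S| = ∫₀^{2π} S = 0`,
and every Fourier coefficient `√(ik) c_k` of `S` vanishes.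
-/

open MeasureTheory Complex Filter Topology Set

open scoped ComplexOrder

/-- `ρ_{ξ,k}(x) = (2/π)(2 w e^{wx} √x ∫₀^{√x} e^{-w u²} du + 1)` with `w = ξ + i k`. -/
noncomputable def rho (ξ : ℝ) (k : ℤ) (x : ℝ) : ℂ :=
  (2 / (Real.pi : ℂ)) *
    (2 * ((ξ : ℂ) + (k : ℂ) * Complex.I) *
        Complex.exp (((ξ : ℂ) + (k : ℂ) * Complex.I) * (x : ℂ)) * (Real.sqrt x : ℂ) *
        (∫ u in (0:ℝ)..Real.sqrt x,
          Complex.exp (-(((ξ : ℂ) + (k : ℂ) * Complex.I)) * (u : ℂ) ^ 2)) + 1)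

lemma norm_cexp_neg_mul_sq_le_one {w : ℂ} (hw : 0 ≤ w.re) (u : ℝ) :
    ‖cexp (-w * (u : ℂ) ^ 2)‖ ≤ 1 := by
  rw [norm_exp, Real.exp_le_one_iff]
  have : (-w * (u : ℂ) ^ 2).re = -(w.re * u ^ 2) := by
    simp [← ofReal_pow]
  rw [this]
  exact neg_nonpos.2 (by positivity)

lemma integral_cexp_neg_mul_sq_eq_sub {w : ℂ} (hw0 : w ≠ 0) {a b : ℝ} (ha : 0 < a)
    (hab : a ≤ b) :
    ∫ u in a..b, cexp (-w * (u : ℂ) ^ 2)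
      = cexp (-w * (a : ℂ) ^ 2) / (2 * w * a) - cexp (-w * (b : ℂ) ^ 2) / (2 * w * b)
        - ∫ u in a..b, cexp (-w * (u : ℂ) ^ 2) / (2 * w * (u : ℂ) ^ 2) := by
  have hpos : ∀ x ∈ uIcc a b, (x : ℂ) ≠ 0 := fun x hx =>
    ofReal_ne_zero.2 (ha.trans_le (by rw [uIcc_of_le hab] at hx; exact hx.1)).ne'
  -- integrate `cexp (-w x²) = -(2 w x)⁻¹ · (cexp (-w x²))'` by parts
  have hu : ∀ x ∈ uIcc a b, HasDerivAt (fun x : ℝ => -(2 * w)⁻¹ * (x : ℂ)⁻¹)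
      ((2 * w)⁻¹ * ((x : ℂ) ^ 2)⁻¹) x := fun x hx => by
    convert ((hasDerivAt_inv (hpos x hx)).const_mul (-(2 * w)⁻¹)).comp_ofReal using 1
    ring
  have hv : ∀ x ∈ uIcc a b, HasDerivAt (fun x : ℝ => cexp (-w * (x : ℂ) ^ 2))
      (cexp (-w * (x : ℂ) ^ 2) * (-w * (2 * x))) x := fun x _ => by
    convert (((hasDerivAt_pow 2 (x : ℂ)).const_mul (-w)).cexp).comp_ofReal using 1
    simp
  have hu' : ContinuousOn (fun x : ℝ => (2 * w)⁻¹ * ((x : ℂ) ^ 2)⁻¹) (uIcc a b) :=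
    continuousOn_const.mul (ContinuousOn.inv₀ (by fun_prop) fun x hx => pow_ne_zero _ (hpos x hx))
  have hibp := intervalIntegral.integral_mul_deriv_eq_deriv_mul hu hv hu'.intervalIntegrable
    ((by fun_prop : Continuous fun x : ℝ => cexp (-w * (x : ℂ) ^ 2) * (-w * (2 * x))
      ).intervalIntegrable a b)
  have hlhs : ∫ u in a..b, cexp (-w * (u : ℂ) ^ 2) = ∫ x in a..b,
      -(2 * w)⁻¹ * (x : ℂ)⁻¹ * (cexp (-w * (x : ℂ) ^ 2) * (-w * (2 * x))) :=
    intervalIntegral.integral_congr fun x hx => by have := hpos x hx; field_simp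
  have hrhs : ∫ x in a..b, (2 * w)⁻¹ * ((x : ℂ) ^ 2)⁻¹ * cexp (-w * (x : ℂ) ^ 2)
      = ∫ u in a..b, cexp (-w * (u : ℂ) ^ 2) / (2 * w * (u : ℂ) ^ 2) :=
    intervalIntegral.integral_congr fun x _ => by field_simp
  rw [hlhs, hibp, hrhs]
  field_simp
  ring

lemma norm_integral_cexp_neg_mul_sq_le {w : ℂ} (hw : 0 ≤ w.re) (hw0 : w ≠ 0) {a b : ℝ}
    (ha : 0 < a) (hab : a ≤ b) :
    ‖∫ u in a..b, cexp (-w * (u : ℂ) ^ 2)‖ ≤ 1 / (‖w‖ * a) := by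
  have hpos : ∀ x ∈ uIcc a b, 0 < x := fun x hx =>
    ha.trans_le (by rw [uIcc_of_le hab] at hx; exact hx.1)
  have hnorm : ∀ x : ℝ, 0 < x → ∀ n : ℕ,
      ‖cexp (-w * (x : ℂ) ^ 2) / (2 * w * (x : ℂ) ^ n)‖ ≤ (2 * ‖w‖)⁻¹ * x ^ (-(n : ℤ)) :=
    fun x hx n => by
      have hden : ‖2 * w * (x : ℂ) ^ n‖ = 2 * ‖w‖ * x ^ n := by simp [abs_of_pos hx]
      rw [norm_div, hden, zpow_neg, zpow_natCast, ← mul_inv, div_eq_mul_inv]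
      exact (mul_le_mul_of_nonneg_right (norm_cexp_neg_mul_sq_le_one hw x) (by positivity)).trans_eq
        (one_mul _)
  have hint : ∫ x in a..b, (2 * ‖w‖)⁻¹ * x ^ (-(2 : ℕ) : ℤ) = (2 * ‖w‖)⁻¹ * (a⁻¹ - b⁻¹) := by
    rw [intervalIntegral.integral_const_mul, integral_zpow
      (Or.inr ⟨by norm_num, fun h => (hpos 0 h).false⟩)]
    congr 1
    norm_num [zpow_neg_one]
    ring
  have hbound := intervalIntegral.norm_integral_le_of_norm_le hab
    (ae_of_all _ fun x hx => hnorm x (ha.trans hx.1) 2)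
    ((continuousOn_const.mul (continuousOn_zpow₀ _ |>.mono
      fun x hx => (hpos x hx).ne')).intervalIntegrable (μ := volume))
  rw [integral_cexp_neg_mul_sq_eq_sub hw0 ha hab]
  calc _ ≤ ‖cexp (-w * (a : ℂ) ^ 2) / (2 * w * a)‖ + ‖cexp (-w * (b : ℂ) ^ 2) / (2 * w * b)‖
        + ‖∫ u in a..b, cexp (-w * (u : ℂ) ^ 2) / (2 * w * (u : ℂ) ^ 2)‖ :=
        norm_sub_le_of_le (norm_sub_le _ _) le_rfl
    _ ≤ (2 * ‖w‖)⁻¹ * a⁻¹ + (2 * ‖w‖)⁻¹ * b⁻¹ + (2 * ‖w‖)⁻¹ * (a⁻¹ - b⁻¹) := by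
      gcongr
      · simpa using hnorm a ha 1
      · simpa using hnorm b (ha.trans_le hab) 1
      · exact hbound.trans_eq hint
    _ = 1 / (‖w‖ * a) := by field_simp; ring

lemma pi_div_cpow_half {w : ℂ} (hw : w.arg ≠ Real.pi) :
    ((Real.pi : ℂ) / w) ^ (1 / 2 : ℂ) = (√Real.pi : ℂ) / w ^ (1 / 2 : ℂ) := by
  rcases eq_or_ne w 0 with rfl | hw0
  · simp
  have hπ : (Real.pi : ℂ) ≠ 0 := ofReal_ne_zero.2 Real.pi_ne_zero
  rw [div_eq_mul_inv (Real.pi : ℂ), div_eq_mul_inv (√Real.pi : ℂ), ← inv_cpow _ _ hw,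
    Real.sqrt_eq_rpow, ofReal_cpow Real.pi_pos.le,
    cpow_def_of_ne_zero (mul_ne_zero hπ (inv_ne_zero hw0)), cpow_def_of_ne_zero hπ,
    cpow_def_of_ne_zero (inv_ne_zero hw0),
    log_ofReal_mul Real.pi_pos (inv_ne_zero hw0), ← exp_add, ofReal_log Real.pi_pos.le, add_mul]
  norm_num

lemma norm_integral_cexp_neg_mul_sq_sub_le_of_re_pos {w : ℂ} (hw : 0 < w.re) {T : ℝ}
    (hT : 0 < T) :
    ‖(∫ u in (0 : ℝ)..T, cexp (-w * (u : ℂ) ^ 2)) - √Real.pi / (2 * w ^ (1 / 2 : ℂ))‖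
      ≤ 1 / (‖w‖ * T) := by
  have hint : ∀ s t : ℝ, IntervalIntegrable (fun u : ℝ => cexp (-w * (u : ℂ) ^ 2)) volume s t :=
    fun s t => (by fun_prop : Continuous fun u : ℝ => cexp (-w * (u : ℂ) ^ 2)
      ).intervalIntegrable s t
  have hlim : Tendsto (fun b => ∫ u in (0 : ℝ)..b, cexp (-w * (u : ℂ) ^ 2)) atTop
      (𝓝 (√Real.pi / (2 * w ^ (1 / 2 : ℂ)))) := by
    have := intervalIntegral_tendsto_integral_Ioi 0
      (integrable_cexp_neg_mul_sq hw).integrableOn tendsto_id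
    rwa [integral_gaussian_complex_Ioi hw, pi_div_cpow_half
      (by rw [Ne, arg_eq_pi_iff]; exact fun h => lt_asymm h.1 hw), div_div, mul_comm] at this
  have htail : Tendsto (fun b => ∫ u in T..b, cexp (-w * (u : ℂ) ^ 2)) atTop
      (𝓝 (√Real.pi / (2 * w ^ (1 / 2 : ℂ)) - ∫ u in (0 : ℝ)..T, cexp (-w * (u : ℂ) ^ 2))) :=
    (hlim.sub_const _).congr fun b =>
      intervalIntegral.integral_interval_sub_left (hint 0 b) (hint 0 T)
  rw [norm_sub_rev]
  refine le_of_tendsto htail.norm ?_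
  filter_upwards [eventually_ge_atTop T] with b hb
  exact norm_integral_cexp_neg_mul_sq_le hw.le (by rintro rfl; simp at hw) hT hb

lemma norm_integral_cexp_neg_mul_sq_sub_le {w : ℂ} (hw : 0 ≤ w.re) (hw0 : w ≠ 0) {T : ℝ}
    (hT : 0 < T) :
    ‖(∫ u in (0 : ℝ)..T, cexp (-w * (u : ℂ) ^ 2)) - √Real.pi / (2 * w ^ (1 / 2 : ℂ))‖
      ≤ 1 / (‖w‖ * T) := by
  -- approximate `w` from the right half plane, where both sides are continuous in `w`
  have hslit : w ∈ slitPlane := by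
    rw [mem_slitPlane_iff]
    rcases hw.lt_or_eq with h | h
    · exact Or.inl h
    · exact Or.inr fun him => hw0 (ext h.symm him)
  have hcont : ContinuousAt (fun z : ℂ => ‖(∫ u in (0 : ℝ)..T, cexp (-z * (u : ℂ) ^ 2))
      - √Real.pi / (2 * z ^ (1 / 2 : ℂ))‖ - 1 / (‖z‖ * T)) w := by
    have hint : Continuous fun z : ℂ => ∫ u in (0 : ℝ)..T, cexp (-z * (u : ℂ) ^ 2) :=
      intervalIntegral.continuous_parametric_intervalIntegral_of_continuous'
        (by fun_prop) 0 T
    have hsqrt : w ^ (1 / 2 : ℂ) ≠ 0 := by simp [cpow_eq_zero_iff, hw0]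
    refine ((hint.continuousAt.sub (continuousAt_const.div
      (continuousAt_const.mul (continuousAt_cpow_const hslit)) ?_)).norm).sub
      (continuousAt_const.div (continuous_norm.continuousAt.mul continuousAt_const) ?_)
    · exact mul_ne_zero two_ne_zero hsqrt
    · exact mul_ne_zero (norm_ne_zero_iff.2 hw0) hT.ne'
  have hlim : Tendsto (fun ε : ℝ => w + ε) (𝓝[>] 0) (𝓝 w) := by
    have : Continuous fun ε : ℝ => w + ε := by fun_prop
    simpa using (this.tendsto 0).mono_left nhdsWithin_le_nhds
  refine sub_nonpos.1 (le_of_tendsto (hcont.tendsto.comp hlim) ?_)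
  filter_upwards [self_mem_nhdsWithin] with ε (hε : 0 < ε)
  exact sub_nonpos.2 (norm_integral_cexp_neg_mul_sq_sub_le_of_re_pos
    (by simpa using add_pos_of_nonneg_of_pos hw hε) hT)

lemma norm_mul_integral_cexp_neg_mul_sq_sub_le {w : ℂ} (hw : 0 ≤ w.re) {T : ℝ} (hT : 0 < T) :
    ‖w * (∫ u in (0 : ℝ)..T, cexp (-w * (u : ℂ) ^ 2)) - √Real.pi / 2 * w ^ (1 / 2 : ℂ)‖
      ≤ 1 / T := by
  rcases eq_or_ne w 0 with rfl | hw0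
  · simp [hT.le]
  have hsq : w ^ (1 / 2 : ℂ) * w ^ (1 / 2 : ℂ) = w := by
    rw [← cpow_add _ _ hw0]; norm_num
  have hsqrt : w ^ (1 / 2 : ℂ) ≠ 0 := by simp [cpow_eq_zero_iff, hw0]
  have hJ : √Real.pi / 2 * w ^ (1 / 2 : ℂ) = w * (√Real.pi / (2 * w ^ (1 / 2 : ℂ))) := by
    field_simp; rw [sq, hsq]
  rw [hJ, ← mul_sub, norm_mul]
  calc _ ≤ ‖w‖ * (1 / (‖w‖ * T)) :=
        mul_le_mul_of_nonneg_left (norm_integral_cexp_neg_mul_sq_sub_le hw hw0 hT) (norm_nonneg _)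
    _ = 1 / T := by field_simp [norm_ne_zero_iff.2 hw0]

lemma norm_rho_sub_le {ξ : ℝ} (hξ : 0 ≤ ξ) (k : ℤ) {x : ℝ} (hx : 0 < x) :
    ‖rho ξ k x - (2 / √Real.pi * √x : ℝ) *
        (((ξ : ℂ) + k * I) ^ (1 / 2 : ℂ) * cexp ((ξ + k * I) * x))‖
      ≤ 6 / Real.pi * Real.exp (ξ * x) := by
  rw [rho]
  set w : ℂ := ξ + k * I
  have hexp : ‖cexp (w * x)‖ = Real.exp (ξ * x) := by simp [norm_exp, w]
  have hw : 0 ≤ w.re := by simpa [w] using hξ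
  clear_value w
  have hπ : 0 < Real.pi := Real.pi_pos
  have hx' : 0 < √x := Real.sqrt_pos.2 hx
  have hsplit : (2 / Real.pi : ℂ) * (2 * w * cexp (w * x) * √x *
        (∫ u in (0 : ℝ)..√x, cexp (-w * (u : ℂ) ^ 2)) + 1)
        - (2 / √Real.pi * √x : ℝ) * (w ^ (1 / 2 : ℂ) * cexp (w * x))
      = (2 / Real.pi : ℂ) * (2 * cexp (w * x) * √x * (w * (∫ u in (0 : ℝ)..√x,
        cexp (-w * (u : ℂ) ^ 2)) - √Real.pi / 2 * w ^ (1 / 2 : ℂ)) + 1) := by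
    have hsπ : (√Real.pi : ℂ) ≠ 0 := ofReal_ne_zero.2 (Real.sqrt_pos.2 hπ).ne'
    have hsqrtπ : (√Real.pi : ℂ) * √Real.pi = Real.pi := by
      rw [← ofReal_mul, Real.mul_self_sqrt hπ.le]
    rw [← hsqrtπ]
    push_cast
    field_simp
    ring
  have h2π : ‖(2 / Real.pi : ℂ)‖ = 2 / Real.pi := by
    rw [← ofReal_ofNat, ← ofReal_div, norm_real, Real.norm_of_nonneg (by positivity)]
  have hone : 1 ≤ Real.exp (ξ * x) := Real.one_le_exp (by positivity)
  rw [hsplit, norm_mul, h2π]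
  calc _ ≤ 2 / Real.pi * (2 * Real.exp (ξ * x) * √x * (1 / √x) + 1) := by
        gcongr
        refine (norm_add_le _ _).trans ?_
        rw [norm_mul, norm_mul, norm_mul, hexp, norm_real, Real.norm_of_nonneg hx'.le, norm_one]
        gcongr
        · norm_num
        · exact norm_mul_integral_cexp_neg_mul_sq_sub_le hw hx'
    _ ≤ 6 / Real.pi * Real.exp (ξ * x) := by
        rw [mul_assoc _ √x, mul_one_div_cancel hx'.ne', mul_one, div_mul_eq_mul_div,
          div_mul_eq_mul_div]
        exact div_le_div_of_nonneg_right (by linarith) hπ.le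

lemma norm_rho_div_sub_le {ξ : ℝ} (hξ : 0 ≤ ξ) (k : ℤ) {x : ℝ} (hx : 0 < x) :
    ‖rho ξ k x / (2 / √Real.pi * Real.exp (ξ * x) * √x : ℝ)
        - ((ξ : ℂ) + k * I) ^ (1 / 2 : ℂ) * cexp (k * I * x)‖
      ≤ 3 / (√Real.pi * √x) := by
  have hA : 0 < 2 / √Real.pi * Real.exp (ξ * x) * √x := by positivity
  have hA0 : ((2 / √Real.pi * Real.exp (ξ * x) * √x : ℝ) : ℂ) ≠ 0 := ofReal_ne_zero.2 hA.ne'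
  have hexp : cexp ((ξ + k * I) * x) = Real.exp (ξ * x) * cexp (k * I * x) := by
    rw [ofReal_exp, ← exp_add]; push_cast; ring_nf
  rw [← mul_div_cancel_left₀ (((ξ : ℂ) + k * I) ^ (1 / 2 : ℂ) * cexp (k * I * x)) hA0,
    ← sub_div, norm_div, norm_real, Real.norm_of_nonneg hA.le, div_le_iff₀ hA]
  calc _ = ‖rho ξ k x - (2 / √Real.pi * √x : ℝ) *
        (((ξ : ℂ) + k * I) ^ (1 / 2 : ℂ) * cexp ((ξ + k * I) * x))‖ := by
        rw [hexp]; push_cast; ring_nf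
    _ ≤ 6 / Real.pi * Real.exp (ξ * x) := norm_rho_sub_le hξ k hx
    _ = _ := by
        field_simp
        rw [Real.sq_sqrt Real.pi_pos.le]
        ring

lemma summable_add_abs_mul_exp_neg_mul_abs (a : ℝ) {δ : ℝ} (hδ : 0 < δ) :
    Summable fun k : ℤ => (a + |(k : ℝ)|) * Real.exp (-δ * |(k : ℝ)|) := by
  have hnat : Summable fun n : ℕ => (a + n) * Real.exp (-δ * n) := by
    simpa [add_mul] using ((Real.summable_pow_mul_exp_neg_nat_mul 0 hδ).mul_left a).add
      (Real.summable_pow_mul_exp_neg_nat_mul 1 hδ)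
  exact .of_nat_of_neg (by simpa using hnat) (by simpa using hnat)

lemma summable_norm_mul_of_norm_le {R : Type*} [NormedRing R] {c g : ℤ → R} {C δ a : ℝ}
    (hδ : 0 < δ) (hc : ∀ k : ℤ, ‖c k‖ ≤ C * Real.exp (-δ * |(k : ℝ)|))
    (hg : ∀ k : ℤ, ‖g k‖ ≤ a + |(k : ℝ)|) : Summable fun k => ‖g k * c k‖ := by
  refine ((summable_add_abs_mul_exp_neg_mul_abs a hδ).mul_left C).of_nonneg_of_le
    (fun _ => norm_nonneg _) fun k => ?_
  calc ‖g k * c k‖ ≤ (a + |(k : ℝ)|) * (C * Real.exp (-δ * |(k : ℝ)|)) :=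
        (norm_mul_le _ _).trans (mul_le_mul (hg k) (hc k) (norm_nonneg _)
          ((norm_nonneg _).trans (hg k)))
    _ = _ := by ring

lemma norm_cpow_half_le (z : ℂ) : ‖z ^ (1 / 2 : ℂ)‖ ≤ 1 + ‖z‖ := by
  rw [show (1 / 2 : ℂ) = ((1 / 2 : ℝ) : ℂ) by norm_num, norm_cpow_real, ← Real.sqrt_eq_rpow]
  nlinarith [Real.sq_sqrt (norm_nonneg z), Real.sqrt_nonneg ‖z‖]

lemma norm_tsum_mul_sub_tsum_mul_le {ι R : Type*} [NormedRing R] [CompleteSpace R]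
    {c f g : ι → R} {ε : ℝ} (hc : Summable (‖c ·‖)) (hg : Summable fun k => c k * g k)
    (hfg : ∀ k, ‖f k - g k‖ ≤ ε) :
    ‖∑' k, c k * f k - ∑' k, c k * g k‖ ≤ (∑' k, ‖c k‖) * ε := by
  have hbound : ∀ k, ‖c k * (f k - g k)‖ ≤ ‖c k‖ * ε := fun k =>
    (norm_mul_le _ _).trans (mul_le_mul_of_nonneg_left (hfg k) (norm_nonneg _))
  have hdiff : Summable fun k => ‖c k * (f k - g k)‖ :=
    (hc.mul_right ε).of_nonneg_of_le (fun _ => norm_nonneg _) hbound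
  have hf : Summable fun k => c k * f k :=
    (hg.add hdiff.of_norm).congr fun k => by rw [mul_sub]; abel
  rw [← hf.tsum_sub hg, ← tsum_mul_right]
  calc ‖∑' k, (c k * f k - c k * g k)‖ = ‖∑' k, c k * (f k - g k)‖ := by simp only [mul_sub]
    _ ≤ ∑' k, ‖c k * (f k - g k)‖ := norm_tsum_le_tsum_norm hdiff
    _ ≤ ∑' k, ‖c k‖ * ε := hdiff.tsum_le_tsum hbound (hc.mul_right ε)

lemma tendsto_tsum_mul_rho_div_sub {ξ : ℝ} (hξ : 0 ≤ ξ) {c : ℤ → ℂ} (hc : Summable (‖c ·‖))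
    (hb : Summable fun k : ℤ => ‖((ξ : ℂ) + k * I) ^ (1 / 2 : ℂ) * c k‖) :
    Tendsto (fun x : ℝ => (∑' k, c k * rho ξ k x) / (2 / √Real.pi * Real.exp (ξ * x) * √x : ℝ)
      - ∑' k : ℤ, ((ξ : ℂ) + k * I) ^ (1 / 2 : ℂ) * c k * cexp (k * I * x)) atTop (𝓝 0) := by
  have hlim : Tendsto (fun x : ℝ => (∑' k, ‖c k‖) * (3 / √Real.pi) * (√x)⁻¹) atTop (𝓝 0) := by
    simpa using (tendsto_inv_atTop_zero.comp Real.tendsto_sqrt_atTop).const_mul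
      ((∑' k, ‖c k‖) * (3 / √Real.pi))
  refine squeeze_zero_norm' ?_ hlim
  filter_upwards [eventually_gt_atTop 0] with x hx
  have hterm : Summable fun k : ℤ =>
      c k * (((ξ : ℂ) + k * I) ^ (1 / 2 : ℂ) * cexp (k * I * x)) := by
    refine .of_norm (hb.congr fun k => ?_)
    simp [norm_exp, mul_comm]
  have hF : (∑' k, c k * rho ξ k x) / (2 / √Real.pi * Real.exp (ξ * x) * √x : ℝ)
      = ∑' k, c k * (rho ξ k x / (2 / √Real.pi * Real.exp (ξ * x) * √x : ℝ)) := by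
    rw [← tsum_div_const]; simp_rw [mul_div_assoc]
  have hS : ∑' k : ℤ, ((ξ : ℂ) + k * I) ^ (1 / 2 : ℂ) * c k * cexp (k * I * x)
      = ∑' k : ℤ, c k * (((ξ : ℂ) + k * I) ^ (1 / 2 : ℂ) * cexp (k * I * x)) :=
    tsum_congr fun k => by ring
  rw [hF, hS]
  refine (norm_tsum_mul_sub_tsum_mul_le hc hterm fun k => norm_rho_div_sub_le hξ k hx).trans_eq ?_
  ring

lemma Function.Periodic.mem_of_tendsto_sub {E : Type*} [TopologicalSpace E] [AddGroup E]
    [IsTopologicalAddGroup E] {S F : ℝ → E} {p : ℝ} (hS : Function.Periodic S p) (hp : 0 < p)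
    {s : Set E} (hs : IsClosed s) (hF : ∀ᶠ t in atTop, F t ∈ s)
    (hFS : Tendsto (fun t => F t - S t) atTop (𝓝 0)) (x : ℝ) : S x ∈ s := by
  have hseq : Tendsto (fun n : ℕ => x + n * p) atTop atTop :=
    tendsto_atTop_add_const_left _ _ (tendsto_natCast_atTop_atTop.atTop_mul_const hp)
  have hlim : Tendsto (fun n : ℕ => F (x + n * p)) atTop (𝓝 (S x)) := by
    have := (hFS.comp hseq).add_const (S x)
    rw [zero_add] at this
    refine this.congr fun n => ?_
    simp [hS.nat_mul n x]
  exact hs.mem_of_tendsto hlim (hseq.eventually hF)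

lemma periodic_cexp_int_mul_I (k : ℤ) :
    Function.Periodic (fun x : ℝ => cexp (k * I * x)) (2 * Real.pi) := fun x => by
  simp only
  rw [show (k : ℂ) * I * ↑(x + 2 * Real.pi) = k * I * x + k * (2 * Real.pi * I) by push_cast; ring,
    exp_add, exp_int_mul_two_pi_mul_I, mul_one]

lemma integral_cexp_int_mul_I (n : ℤ) :
    ∫ x in (0 : ℝ)..2 * Real.pi, cexp (n * I * x) = if n = 0 then 2 * (Real.pi : ℂ) else 0 := by
  split_ifs with hn
  · simp [hn]
  have hc : (n : ℂ) * I ≠ 0 := mul_ne_zero (Int.cast_ne_zero.2 hn) I_ne_zero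
  rw [integral_exp_mul_complex hc, show (n : ℂ) * I * ↑(2 * Real.pi) = n * (2 * Real.pi * I) by
    push_cast; ring, exp_int_mul_two_pi_mul_I]
  simp

lemma integral_tsum_mul_cexp_mul_cexp {b : ℤ → ℂ} (hb : Summable (‖b ·‖)) (j : ℤ) :
    ∫ x in (0 : ℝ)..2 * Real.pi, (∑' k, b k * cexp (k * I * x)) * cexp (-(j * I * x))
      = 2 * Real.pi * b j := by
  let f : ℤ → C(ℝ, ℂ) := fun k => ⟨fun x => b k * cexp ((k - j : ℤ) * I * x), by fun_prop⟩
  have hf : ∀ k x, ‖f k x‖ = ‖b k‖ := fun k x => by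
    simp [f, norm_exp, mul_comm]
  have hsum : Summable fun k => ‖(f k).restrict (⟨uIcc 0 (2 * Real.pi), isCompact_uIcc⟩ :
      TopologicalSpace.Compacts ℝ)‖ :=
    hb.of_nonneg_of_le (fun _ => norm_nonneg _) fun k =>
      (ContinuousMap.norm_le _ (norm_nonneg _)).2 fun x => (hf k x).le
  have hprod : ∀ x : ℝ, (∑' k, b k * cexp (k * I * x)) * cexp (-(j * I * x)) = ∑' k, f k x :=
    fun x => by
      rw [← tsum_mul_right]
      refine tsum_congr fun k => ?_
      simp only [f, ContinuousMap.coe_mk, mul_assoc, ← exp_add]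
      push_cast; ring_nf
  simp_rw [hprod, ← intervalIntegral.tsum_intervalIntegral_eq_of_summable_norm hsum]
  simp only [f, ContinuousMap.coe_mk, intervalIntegral.integral_const_mul,
    integral_cexp_int_mul_I, sub_eq_zero, mul_ite, mul_zero]
  rw [tsum_ite_eq, mul_comm]

lemma eq_zero_of_tsum_mul_cexp_nonneg {b : ℤ → ℂ} (hb : Summable (‖b ·‖))
    (hS : ∀ x : ℝ, 0 ≤ ∑' k, b k * cexp (k * I * x)) (h0 : b 0 = 0) (j : ℤ) : b j = 0 := by
  set S : ℝ → ℂ := fun x => ∑' k, b k * cexp (k * I * x)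
  have hS_norm : ∀ x, (‖S x‖ : ℂ) = S x := fun x => by
    rw [← re_eq_norm.2 (hS x)]
    exact (eq_re_of_ofReal_le (r := 0) (by simpa using hS x)).symm
  -- `S ≥ 0` has mean `2π b₀ = 0`, so it vanishes in `L¹`
  have hL1 : ∫ x in (0 : ℝ)..2 * Real.pi, ‖S x‖ = 0 := by
    apply ofReal_injective
    rw [← intervalIntegral.integral_ofReal]
    simp_rw [hS_norm]
    simpa [h0] using integral_tsum_mul_cexp_mul_cexp hb 0
  have : ‖2 * (Real.pi : ℂ) * b j‖ ≤ 0 := by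
    rw [← integral_tsum_mul_cexp_mul_cexp hb j]
    refine (intervalIntegral.norm_integral_le_integral_norm Real.two_pi_pos.le).trans_eq ?_
    refine (intervalIntegral.integral_congr fun x _ => ?_).trans hL1
    simp [norm_exp, S]
  simpa [Real.pi_pos.ne'] using norm_le_zero_iff.1 this

theorem stmt16_general (ξ : ℝ) (hξ : 0 ≤ ξ) (C δ : ℝ) (hδ : 0 < δ)
    (c : ℤ → ℂ)
    (hdecay : ∀ k : ℤ, ‖c k‖ ≤ C * Real.exp (-δ * |(k : ℝ)|))
    (hpos : ∀ x : ℝ, 0 ≤ x →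
      (∑' k : ℤ, c k * rho ξ k x).im = 0 ∧ 0 < (∑' k : ℤ, c k * rho ξ k x).re) :
    (∀ x : ℝ,
      (∑' k : ℤ, ((ξ : ℂ) + (k : ℂ) * Complex.I) ^ ((1:ℂ)/2) * c k *
        Complex.exp ((k : ℂ) * Complex.I * (x : ℂ))).im = 0 ∧
      0 ≤ (∑' k : ℤ, ((ξ : ℂ) + (k : ℂ) * Complex.I) ^ ((1:ℂ)/2) * c k *
        Complex.exp ((k : ℂ) * Complex.I * (x : ℂ))).re) ∧
    (ξ = 0 → ∀ k : ℤ, k ≠ 0 → c k = 0) := by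
  have hc : Summable (‖c ·‖) := by
    simpa using summable_norm_mul_of_norm_le (g := 1) (a := 1) hδ hdecay fun k => by simp
  have hb : Summable fun k : ℤ => ‖((ξ : ℂ) + k * I) ^ (1 / 2 : ℂ) * c k‖ := by
    refine summable_norm_mul_of_norm_le (a := 1 + ξ) hδ hdecay fun k => ?_
    have := norm_add_le (ξ : ℂ) (k * I)
    simp only [norm_real, Real.norm_of_nonneg hξ, norm_mul, norm_intCast, norm_I, mul_one] at this
    linarith [norm_cpow_half_le ((ξ : ℂ) + k * I)]
  have hS : ∀ x : ℝ, 0 ≤ ∑' k : ℤ, ((ξ : ℂ) + k * I) ^ (1 / 2 : ℂ) * c k * cexp (k * I * x) := by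
    refine Function.Periodic.mem_of_tendsto_sub (s := Ici 0)
      (fun x => tsum_congr fun k => congrArg (_ * ·) (periodic_cexp_int_mul_I k x))
      Real.two_pi_pos isClosed_Ici ?_ (tendsto_tsum_mul_rho_div_sub hξ hc hb)
    filter_upwards [eventually_ge_atTop 0] with x hx
    exact div_nonneg (nonneg_iff.2 ⟨(hpos x hx).2.le, (hpos x hx).1.symm⟩)
      (zero_le_real.2 (by positivity))
  refine ⟨fun x => ⟨(nonneg_iff.1 (hS x)).2.symm, (nonneg_iff.1 (hS x)).1⟩, ?_⟩
  rintro rfl k hk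
  simpa [cpow_eq_zero_iff, hk] using eq_zero_of_tsum_mul_cexp_nonneg hb hS (by simp) k

/-- if `ρ̃(x) = Σ c_k ρ_{ξ,k}(x)` is a positive real for all `x ≥ 0`, then
`Σ √(ξ+ik) c_k e^{ikx}` is a nonnegative real for all `x`, and for `ξ = 0` all `c_k`
with `k ≠ 0` vanish. -/
theorem stmt16 (ξ : ℝ) (hξ : 0 ≤ ξ) (C δ : ℝ) (hC : 0 < C) (hδ : 0 < δ)
    (c : ℤ → ℂ) (hconj : ∀ k : ℤ, c (-k) = starRingEnd ℂ (c k))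
    (hdecay : ∀ k : ℤ, ‖c k‖ ≤ C * Real.exp (-δ * |(k : ℝ)|))
    (hpos : ∀ x : ℝ, 0 ≤ x →
      (∑' k : ℤ, c k * rho ξ k x).im = 0 ∧ 0 < (∑' k : ℤ, c k * rho ξ k x).re) :
    (∀ x : ℝ,
      (∑' k : ℤ, ((ξ : ℂ) + (k : ℂ) * Complex.I) ^ ((1:ℂ)/2) * c k *
        Complex.exp ((k : ℂ) * Complex.I * (x : ℂ))).im = 0 ∧
      0 ≤ (∑' k : ℤ, ((ξ : ℂ) + (k : ℂ) * Complex.I) ^ ((1:ℂ)/2) * c k *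
        Complex.exp ((k : ℂ) * Complex.I * (x : ℂ))).re) ∧
    (ξ = 0 → ∀ k : ℤ, k ≠ 0 → c k = 0) :=
  stmt16_general ξ hξ C δ hδ c hdecay hpos
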